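/- For every m > 0 there exists a constant c = c(m) > 0 such that for all u, g ∈ ℝ^N: I_m(u,g) ≤ c · (‖u‖ + ‖g‖)^{m−1} · ‖u − g‖² and (‖u‖ + ‖g‖)^{m−1} · ‖u − g‖² ≤ c · ‖u^m − g^m‖ · ‖u − g‖, with the convention that 0 raised to a negative real power equals 0. -/

import Mathlib

open scoped RealInnerProductSpace

noncomputable section

/-- The signed power `x^m := ‖x‖^(m-1) • x` on `ℝ^N` (Euclidean norm, `0^m := 0`). -/
def vpow {N : ℕ} (m : ℝ) (x : EuclideanSpace ℝ (Fin N)) : EuclideanSpace ℝ (Fin N) :=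
  (‖x‖ ^ (m - 1)) • x

/-- The boundary term `I_m(u,g) := (1/(m+1))·(‖u‖^{m+1} − ‖g‖^{m+1}) − g^m · (u − g)`. -/
def Ifun {N : ℕ} (m : ℝ) (u g : EuclideanSpace ℝ (Fin N)) : ℝ :=
  (1 / (m + 1)) * (‖u‖ ^ (m + 1) - ‖g‖ ^ (m + 1)) - ⟪vpow m g, u - g⟫

/-!
Write `a = ‖u‖`, `b = ‖g‖`, `t = ⟪u, g⟫`. Since `x ↦ ‖x‖^(m+1)/(m+1)` is convex with gradient
`x^m`, the gradient inequality at `u` gives `I_m(u,g) ≤ ⟪u^m - g^m, u - g⟫`, so both claims follow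
from a two-sided comparison of `⟪u^m - g^m, u - g⟫` with `(a+b)^(m-1) ‖u - g‖²`. Both quantities
are affine in `t ∈ [-ab, ab]`, so it suffices to compare them at `t = ±ab`. At `t = -ab` this is
`(a^m + b^m)(a+b) ≍ (a+b)^(m+1)`. At `t = ab` it is `(a^m - b^m)(a-b) ≍ (a+b)^(m-1) (a-b)²`, which
for `b ≤ a` follows from `a^m - b^m ≍ a^(m-1) (a-b)` (Bernoulli's inequality one way, monotonicity
of `x^(m-1)` the other) and `a^(m-1) ≍ (a+b)^(m-1)` (as `a ≤ a+b ≤ 2a`).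
-/

open Real

section RpowComparison

variable {a b m : ℝ}

lemma rpow_sub_one_mul_self (ha : 0 ≤ a) (hm : m ≠ 0) : a ^ (m - 1) * a = a ^ m := by
  rw [← rpow_add_one' ha (by rwa [sub_add_cancel]), sub_add_cancel]

lemma rpow_add_mul_rpow_sub_one_mul_sub_eq {p : ℝ} (ha : 0 < a) :
    a ^ p + p * a ^ (p - 1) * (b - a) = a ^ p * (1 + p * (b / a - 1)) := by
  rw [rpow_sub_one ha.ne']
  field_simp

lemma rpow_eq_rpow_mul_one_add_rpow {p : ℝ} (ha : 0 < a) (hb : 0 ≤ b) :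
    b ^ p = a ^ p * (1 + (b / a - 1)) ^ p := by
  rw [add_sub_cancel, div_rpow hb ha.le, mul_div_cancel₀ _ (rpow_pos_of_pos ha p).ne']

lemma rpow_add_mul_rpow_sub_one_mul_sub_le {p : ℝ} (hp : 1 ≤ p) (ha : 0 ≤ a) (hb : 0 ≤ b) :
    a ^ p + p * a ^ (p - 1) * (b - a) ≤ b ^ p := by
  rcases ha.eq_or_lt with rfl | ha
  · rcases hp.eq_or_lt with rfl | hp
    · simp
    · rw [zero_rpow (by linarith), zero_rpow (by linarith)]
      simpa using rpow_nonneg hb p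
  rw [rpow_add_mul_rpow_sub_one_mul_sub_eq ha, rpow_eq_rpow_mul_one_add_rpow ha hb]
  have hs : -1 ≤ b / a - 1 := by linarith [div_nonneg hb ha.le]
  exact mul_le_mul_of_nonneg_left (one_add_mul_self_le_rpow_one_add hs hp)
    (rpow_nonneg ha.le p)

lemma rpow_le_rpow_add_mul_rpow_sub_one_mul_sub {p : ℝ} (hp₀ : 0 ≤ p) (hp₁ : p ≤ 1)
    (ha : 0 < a) (hb : 0 ≤ b) :
    b ^ p ≤ a ^ p + p * a ^ (p - 1) * (b - a) := by
  rw [rpow_add_mul_rpow_sub_one_mul_sub_eq ha, rpow_eq_rpow_mul_one_add_rpow ha hb]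
  have hs : -1 ≤ b / a - 1 := by linarith [div_nonneg hb ha.le]
  exact mul_le_mul_of_nonneg_left (rpow_one_add_le_one_add_mul_self hs hp₀ hp₁)
    (rpow_nonneg ha.le p)

lemma rpow_sub_rpow_le_max_mul (hm : 0 < m) (hb : 0 ≤ b) (hba : b ≤ a) :
    a ^ m - b ^ m ≤ max 1 m * (a ^ (m - 1) * (a - b)) := by
  have ha : 0 ≤ a := hb.trans hba
  have hX : 0 ≤ a ^ (m - 1) * (a - b) := mul_nonneg (rpow_nonneg ha _) (sub_nonneg.2 hba)
  rcases le_total 1 m with h1 | h1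
  · have := rpow_add_mul_rpow_sub_one_mul_sub_le h1 ha hb
    nlinarith [le_max_right 1 m]
  · have hb' : a ^ (m - 1) * b ≤ b ^ m := by
      rcases hb.eq_or_lt with rfl | hb
      · simp [zero_rpow hm.ne']
      rw [← rpow_sub_one_mul_self hb.le hm.ne']
      exact mul_le_mul_of_nonneg_right (rpow_le_rpow_of_nonpos hb hba (by linarith)) hb.le
    calc a ^ m - b ^ m ≤ a ^ (m - 1) * (a - b) := by
          rw [← rpow_sub_one_mul_self ha hm.ne']; linarith
      _ ≤ max 1 m * (a ^ (m - 1) * (a - b)) := le_mul_of_one_le_left hX (le_max_left 1 m)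

lemma min_mul_le_rpow_sub_rpow (hm : 0 < m) (hb : 0 ≤ b) (hba : b ≤ a) :
    min 1 m * (a ^ (m - 1) * (a - b)) ≤ a ^ m - b ^ m := by
  have ha : 0 ≤ a := hb.trans hba
  have hX : 0 ≤ a ^ (m - 1) * (a - b) := mul_nonneg (rpow_nonneg ha _) (sub_nonneg.2 hba)
  rcases le_total 1 m with h1 | h1
  · have hb' : b ^ m ≤ a ^ (m - 1) * b := by
      rw [← rpow_sub_one_mul_self hb hm.ne']
      exact mul_le_mul_of_nonneg_right (rpow_le_rpow hb hba (by linarith)) hb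
    calc min 1 m * (a ^ (m - 1) * (a - b)) ≤ a ^ (m - 1) * (a - b) :=
          mul_le_of_le_one_left hX (min_le_left 1 m)
      _ ≤ a ^ m - b ^ m := by rw [← rpow_sub_one_mul_self ha hm.ne']; linarith
  · rcases ha.eq_or_lt with rfl | ha
    · simp [le_antisymm hba hb]
    have := rpow_le_rpow_add_mul_rpow_sub_one_mul_sub hm.le h1 ha hb
    nlinarith [min_le_right 1 m]

lemma rpow_le_two_rpow_abs_mul_rpow {x y e : ℝ} (hy : 0 < y) (hxy : x ≤ 2 * y)
    (hyx : y ≤ 2 * x) : x ^ e ≤ 2 ^ |e| * y ^ e := by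
  have hx : 0 < x := by linarith
  rcases le_total 0 e with he | he
  · calc x ^ e ≤ (2 * y) ^ e := rpow_le_rpow hx.le hxy he
      _ = 2 ^ |e| * y ^ e := by rw [abs_of_nonneg he, mul_rpow zero_le_two hy.le]
  · calc x ^ e ≤ (y / 2) ^ e := rpow_le_rpow_of_nonpos (by positivity) (by linarith) he
      _ = 2 ^ |e| * y ^ e := by
          rw [abs_of_nonpos he, div_rpow hy.le zero_le_two, rpow_neg zero_le_two]
          ring

lemma rpow_sub_rpow_mul_sub_le_of_le (hm : 0 < m) (hb : 0 ≤ b) (hba : b ≤ a) :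
    (a ^ m - b ^ m) * (a - b) ≤ max 1 m * 2 ^ |m - 1| * ((a + b) ^ (m - 1) * (a - b) ^ 2) := by
  rcases (hb.trans hba).eq_or_lt with rfl | ha
  · simp [le_antisymm hba hb]
  have hab : 0 ≤ a - b := sub_nonneg.2 hba
  have hP : a ^ (m - 1) ≤ 2 ^ |m - 1| * (a + b) ^ (m - 1) :=
    rpow_le_two_rpow_abs_mul_rpow (by linarith) (by linarith) (by linarith)
  calc (a ^ m - b ^ m) * (a - b) ≤ max 1 m * (a ^ (m - 1) * (a - b)) * (a - b) :=
        mul_le_mul_of_nonneg_right (rpow_sub_rpow_le_max_mul hm hb hba) hab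
    _ ≤ max 1 m * (2 ^ |m - 1| * (a + b) ^ (m - 1) * (a - b)) * (a - b) := by gcongr
    _ = max 1 m * 2 ^ |m - 1| * ((a + b) ^ (m - 1) * (a - b) ^ 2) := by ring

lemma min_mul_rpow_mul_sub_sq_le_of_le (hm : 0 < m) (hb : 0 ≤ b) (hba : b ≤ a) :
    min 1 m * ((a + b) ^ (m - 1) * (a - b) ^ 2) ≤ 2 ^ |m - 1| * ((a ^ m - b ^ m) * (a - b)) := by
  rcases (hb.trans hba).eq_or_lt with rfl | ha
  · simp [le_antisymm hba hb]
  have hab : 0 ≤ a - b := sub_nonneg.2 hba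
  have hS : (a + b) ^ (m - 1) ≤ 2 ^ |m - 1| * a ^ (m - 1) :=
    rpow_le_two_rpow_abs_mul_rpow ha (by linarith) (by linarith)
  calc min 1 m * ((a + b) ^ (m - 1) * (a - b) ^ 2)
        ≤ min 1 m * (2 ^ |m - 1| * a ^ (m - 1) * (a - b) ^ 2) := by gcongr
    _ = 2 ^ |m - 1| * (min 1 m * (a ^ (m - 1) * (a - b)) * (a - b)) := by ring
    _ ≤ 2 ^ |m - 1| * ((a ^ m - b ^ m) * (a - b)) := by
        gcongr; exact min_mul_le_rpow_sub_rpow hm hb hba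

lemma rpow_sub_rpow_mul_sub_le (hm : 0 < m) (ha : 0 ≤ a) (hb : 0 ≤ b) :
    (a ^ m - b ^ m) * (a - b) ≤ max 1 m * 2 ^ |m - 1| * ((a + b) ^ (m - 1) * (a - b) ^ 2) := by
  rcases le_total b a with h | h
  · exact rpow_sub_rpow_mul_sub_le_of_le hm hb h
  · have := rpow_sub_rpow_mul_sub_le_of_le hm ha h
    rw [add_comm b a] at this
    linear_combination this

lemma min_mul_rpow_mul_sub_sq_le (hm : 0 < m) (ha : 0 ≤ a) (hb : 0 ≤ b) :
    min 1 m * ((a + b) ^ (m - 1) * (a - b) ^ 2) ≤ 2 ^ |m - 1| * ((a ^ m - b ^ m) * (a - b)) := by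
  rcases le_total b a with h | h
  · exact min_mul_rpow_mul_sub_sq_le_of_le hm hb h
  · have := min_mul_rpow_mul_sub_sq_le_of_le hm ha h
    rw [add_comm b a] at this
    linear_combination this

lemma rpow_add_rpow_le_two_mul_rpow_add (hm : 0 ≤ m) (ha : 0 ≤ a) (hb : 0 ≤ b) :
    a ^ m + b ^ m ≤ 2 * (a + b) ^ m := by
  have := rpow_le_rpow ha (le_add_of_nonneg_right hb) hm
  have := rpow_le_rpow hb (le_add_of_nonneg_left ha) hm
  linarith

lemma rpow_add_le_two_rpow_mul_rpow_add_rpow (hm : 0 ≤ m) (ha : 0 ≤ a) (hb : 0 ≤ b) :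
    (a + b) ^ m ≤ 2 ^ m * (a ^ m + b ^ m) := by
  calc (a + b) ^ m ≤ (2 * max a b) ^ m :=
        rpow_le_rpow (by positivity) (by linarith [le_max_left a b, le_max_right a b]) hm
    _ = 2 ^ m * max a b ^ m := mul_rpow zero_le_two (le_max_of_le_left ha)
    _ ≤ 2 ^ m * (a ^ m + b ^ m) := by
        gcongr
        rcases max_choice a b with h | h <;> rw [h] <;>
          linarith [rpow_nonneg ha m, rpow_nonneg hb m]

end RpowComparison

lemma add_mul_le_add_mul_of_abs_le {p q r s y t : ℝ} (hpos : p + q * y ≤ r + s * y)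
    (hneg : p + q * -y ≤ r + s * -y) (ht : |t| ≤ y) : p + q * t ≤ r + s * t := by
  obtain ⟨h₁, h₂⟩ := abs_le.1 ht
  rcases le_total q s with h | h <;> nlinarith

section SignedPower

variable {N : ℕ} {m : ℝ}

lemma inner_vpow_sub_vpow_sub (u g : EuclideanSpace ℝ (Fin N)) :
    ⟪vpow m u - vpow m g, u - g⟫ = ‖u‖ ^ (m - 1) * ‖u‖ ^ 2 + ‖g‖ ^ (m - 1) * ‖g‖ ^ 2
      - (‖u‖ ^ (m - 1) + ‖g‖ ^ (m - 1)) * ⟪u, g⟫ := by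
  simp only [vpow, inner_sub_left, inner_sub_right, real_inner_smul_left, real_inner_comm g u,
    real_inner_self_eq_norm_sq]
  ring

lemma inner_vpow_sub_vpow_le (hm : 0 < m) (u g : EuclideanSpace ℝ (Fin N)) :
    ⟪vpow m u - vpow m g, u - g⟫ ≤
      max (max 1 m * 2 ^ |m - 1|) 2 * ((‖u‖ + ‖g‖) ^ (m - 1) * ‖u - g‖ ^ 2) := by
  set C := max (max 1 m * 2 ^ |m - 1|) 2
  set a := ‖u‖
  set b := ‖g‖
  have ha : 0 ≤ a := norm_nonneg u
  have hb : 0 ≤ b := norm_nonneg g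
  have hsame : (a ^ m - b ^ m) * (a - b) ≤ C * ((a + b) ^ (m - 1) * (a - b) ^ 2) :=
    (rpow_sub_rpow_mul_sub_le hm ha hb).trans
      (mul_le_mul_of_nonneg_right (le_max_left _ _) (by positivity))
  have hopp : (a ^ m + b ^ m) * (a + b) ≤ C * ((a + b) ^ (m - 1) * (a + b) ^ 2) :=
    calc (a ^ m + b ^ m) * (a + b) ≤ 2 * (a + b) ^ m * (a + b) :=
          mul_le_mul_of_nonneg_right (rpow_add_rpow_le_two_mul_rpow_add hm.le ha hb)
            (by positivity)
      _ = 2 * ((a + b) ^ (m - 1) * (a + b) ^ 2) := by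
          rw [← rpow_sub_one_mul_self (by positivity) hm.ne']; ring
      _ ≤ C * ((a + b) ^ (m - 1) * (a + b) ^ 2) :=
          mul_le_mul_of_nonneg_right (le_max_right _ _) (by positivity)
  rw [← rpow_sub_one_mul_self ha hm.ne', ← rpow_sub_one_mul_self hb hm.ne'] at hsame hopp
  have key := add_mul_le_add_mul_of_abs_le
    (p := a ^ (m - 1) * a ^ 2 + b ^ (m - 1) * b ^ 2) (q := -(a ^ (m - 1) + b ^ (m - 1)))
    (r := C * (a + b) ^ (m - 1) * (a ^ 2 + b ^ 2)) (s := -2 * C * (a + b) ^ (m - 1))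
    (by linear_combination hsame) (by linear_combination hopp) (abs_real_inner_le_norm u g)
  rw [inner_vpow_sub_vpow_sub, norm_sub_sq_real]
  linear_combination key

lemma rpow_mul_norm_sub_sq_le (hm : 0 < m) (u g : EuclideanSpace ℝ (Fin N)) :
    (‖u‖ + ‖g‖) ^ (m - 1) * ‖u - g‖ ^ 2 ≤
      max (2 ^ |m - 1| / min 1 m) (2 ^ m) * ⟪vpow m u - vpow m g, u - g⟫ := by
  set C := max (2 ^ |m - 1| / min 1 m) (2 ^ m)
  set a := ‖u‖
  set b := ‖g‖
  have ha : 0 ≤ a := norm_nonneg u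
  have hb : 0 ≤ b := norm_nonneg g
  have hμ : 0 < min 1 m := lt_min one_pos hm
  have hsame : (a + b) ^ (m - 1) * (a - b) ^ 2 ≤ C * ((a ^ m - b ^ m) * (a - b)) := by
    have h := min_mul_rpow_mul_sub_sq_le hm ha hb
    have hX : 0 ≤ (a ^ m - b ^ m) * (a - b) := by
      have : 0 ≤ min 1 m * ((a + b) ^ (m - 1) * (a - b) ^ 2) := by positivity
      exact nonneg_of_mul_nonneg_right (this.trans h) (by positivity)
    calc (a + b) ^ (m - 1) * (a - b) ^ 2
          ≤ 2 ^ |m - 1| / min 1 m * ((a ^ m - b ^ m) * (a - b)) := by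
          rw [div_mul_eq_mul_div, le_div_iff₀ hμ]; linarith
      _ ≤ C * ((a ^ m - b ^ m) * (a - b)) := mul_le_mul_of_nonneg_right (le_max_left _ _) hX
  have hopp : (a + b) ^ (m - 1) * (a + b) ^ 2 ≤ C * ((a ^ m + b ^ m) * (a + b)) :=
    calc (a + b) ^ (m - 1) * (a + b) ^ 2 = (a + b) ^ m * (a + b) := by
          rw [← rpow_sub_one_mul_self (by positivity) hm.ne']; ring
      _ ≤ 2 ^ m * (a ^ m + b ^ m) * (a + b) := mul_le_mul_of_nonneg_right
          (rpow_add_le_two_rpow_mul_rpow_add_rpow hm.le ha hb) (by positivity)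
      _ ≤ C * ((a ^ m + b ^ m) * (a + b)) := by
          rw [mul_assoc]; exact mul_le_mul_of_nonneg_right (le_max_right _ _) (by positivity)
  rw [← rpow_sub_one_mul_self ha hm.ne', ← rpow_sub_one_mul_self hb hm.ne'] at hsame hopp
  have key := add_mul_le_add_mul_of_abs_le
    (p := (a + b) ^ (m - 1) * (a ^ 2 + b ^ 2)) (q := -2 * (a + b) ^ (m - 1))
    (r := C * (a ^ (m - 1) * a ^ 2 + b ^ (m - 1) * b ^ 2))
    (s := -C * (a ^ (m - 1) + b ^ (m - 1)))
    (by linear_combination hsame) (by linear_combination hopp) (abs_real_inner_le_norm u g)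
  rw [inner_vpow_sub_vpow_sub, norm_sub_sq_real]
  linear_combination key

lemma Ifun_le_inner_vpow_sub_vpow (hm : 0 < m) (u g : EuclideanSpace ℝ (Fin N)) :
    Ifun m u g ≤ ⟪vpow m u - vpow m g, u - g⟫ := by
  set a := ‖u‖
  set b := ‖g‖
  have ha : 0 ≤ a := norm_nonneg u
  have hb : 0 ≤ b := norm_nonneg g
  have htangent := rpow_add_mul_rpow_sub_one_mul_sub_le (p := m + 1) (by linarith) ha hb
  rw [add_sub_cancel_right] at htangent
  have hvpow : ⟪vpow m u, u - g⟫ = a ^ (m - 1) * (a ^ 2 - ⟪u, g⟫) := by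
    simp only [vpow, inner_sub_right, real_inner_smul_left, real_inner_self_eq_norm_sq]
    ring
  suffices h : 1 / (m + 1) * (a ^ (m + 1) - b ^ (m + 1)) ≤ ⟪vpow m u, u - g⟫ by
    rw [Ifun, inner_sub_left]; linarith
  calc 1 / (m + 1) * (a ^ (m + 1) - b ^ (m + 1)) ≤ a ^ m * (a - b) := by
        rw [one_div_mul_eq_div, div_le_iff₀ (by linarith)]; linarith
    _ = a ^ (m - 1) * (a ^ 2 - a * b) := by rw [← rpow_sub_one_mul_self ha hm.ne']; ring
    _ ≤ ⟪vpow m u, u - g⟫ := by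
        rw [hvpow]; gcongr; exact real_inner_le_norm u g

end SignedPower

theorem boundary_term_le_general {N : ℕ} (m : ℝ) (hm : 0 < m) :
    ∃ c : ℝ, 0 < c ∧ ∀ u g : EuclideanSpace ℝ (Fin N),
      Ifun m u g ≤ c * ((‖u‖ + ‖g‖) ^ (m - 1) * ‖u - g‖ ^ 2) ∧
      (‖u‖ + ‖g‖) ^ (m - 1) * ‖u - g‖ ^ 2 ≤ c * (‖vpow m u - vpow m g‖ * ‖u - g‖) := by
  set A := max (max 1 m * 2 ^ |m - 1|) 2
  set B := max (2 ^ |m - 1| / min 1 m) (2 ^ m)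
  refine ⟨max A B, by positivity, fun u g => ⟨?_, ?_⟩⟩
  · calc Ifun m u g ≤ ⟪vpow m u - vpow m g, u - g⟫ := Ifun_le_inner_vpow_sub_vpow hm u g
      _ ≤ A * ((‖u‖ + ‖g‖) ^ (m - 1) * ‖u - g‖ ^ 2) := inner_vpow_sub_vpow_le hm u g
      _ ≤ max A B * ((‖u‖ + ‖g‖) ^ (m - 1) * ‖u - g‖ ^ 2) := by
          gcongr; exact le_max_left A B
  · calc (‖u‖ + ‖g‖) ^ (m - 1) * ‖u - g‖ ^ 2 ≤ B * ⟪vpow m u - vpow m g, u - g⟫ :=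
          rpow_mul_norm_sub_sq_le hm u g
      _ ≤ B * (‖vpow m u - vpow m g‖ * ‖u - g‖) := by
          gcongr; exact real_inner_le_norm _ _
      _ ≤ max A B * (‖vpow m u - vpow m g‖ * ‖u - g‖) := by
          gcongr; exact le_max_right A B

/-- For every `m > 0` there is `c = c(m) > 0` such that for all `u, g ∈ ℝ^N`:
`I_m(u,g) ≤ c·(‖u‖ + ‖g‖)^(m−1)·‖u − g‖²` and
`(‖u‖ + ‖g‖)^(m−1)·‖u − g‖² ≤ c·‖u^m − g^m‖·‖u − g‖`
(with the `Real.rpow` convention that `0` to a negative power is `0`). -/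
theorem boundary_term_le {N : ℕ} (hN : 1 ≤ N) (m : ℝ) (hm : 0 < m) :
    ∃ c : ℝ, 0 < c ∧ ∀ u g : EuclideanSpace ℝ (Fin N),
      Ifun m u g ≤ c * ((‖u‖ + ‖g‖) ^ (m - 1) * ‖u - g‖ ^ 2) ∧
      (‖u‖ + ‖g‖) ^ (m - 1) * ‖u - g‖ ^ 2 ≤ c * (‖vpow m u - vpow m g‖ * ‖u - g‖) :=
  boundary_term_le_general m hm

end
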